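/- arXiv:1403.0622 — 2 statements merged into one kernel-verified Lean document; each statement's English description precedes it below -/
import Mathlib

section
/- Let G be a κ-deletion-minimal graph with respect to total coloring. Suppose u and v are adjacent with deg_G(v) ≤ ⌊(κ−1)/2⌋ and deg_G(u) + deg_G(v) ≤ κ + 1. If the edge uv lies in a triangle uvw, then deg_G(w) = κ − 1. -/
open SimpleGraph

variable {V : Type*}

/-- The degree of a vertex, defined via the cardinality of its neighbor set. -/
noncomputable def deg (G : SimpleGraph V) (v : V) : ℕ := (G.neighborSet v).ncard

/-- The maximum degree of a graph. -/
noncomputable def maxDeg (G : SimpleGraph V) : ℕ := ⨆ v, deg G v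

/-- `fv` colors the vertices and `fe` colors the edges; together they form a total
coloring: adjacent vertices get distinct colors, distinct edges sharing a vertex get
distinct colors, and a vertex gets a color distinct from every edge incident to it. -/
def IsTotalColoring (G : SimpleGraph V) {α : Type*} (fv : V → α) (fe : Sym2 V → α) : Prop :=
  (∀ u v : V, G.Adj u v → fv u ≠ fv v) ∧
  (∀ e₁ e₂ : Sym2 V, e₁ ∈ G.edgeSet → e₂ ∈ G.edgeSet → e₁ ≠ e₂ →
      (∃ w : V, w ∈ e₁ ∧ w ∈ e₂) → fe e₁ ≠ fe e₂) ∧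
  (∀ (v : V) (e : Sym2 V), e ∈ G.edgeSet → v ∈ e → fv v ≠ fe e)

/-- `G` has a total coloring with `n` colors. -/
def HasTotalColoring (G : SimpleGraph V) (n : ℕ) : Prop :=
  ∃ (fv : V → Fin n) (fe : Sym2 V → Fin n), IsTotalColoring G fv fe

/-- The total chromatic number of `G`. -/
noncomputable def totalChromaticNumber (G : SimpleGraph V) : ℕ :=
  sInf {n | HasTotalColoring G n}

/-- A `κ`-deletion-minimal graph: maximum degree at most `κ - 1`, total chromatic
number greater than `κ`, but every proper subgraph has total chromatic number at most `κ`. -/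
def DeletionMinimal (κ : ℕ) (G : SimpleGraph V) : Prop :=
  (∀ v : V, deg G v ≤ κ - 1) ∧ κ < totalChromaticNumber G ∧
  ∀ H : SimpleGraph V, H < G → totalChromaticNumber H ≤ κ

/-!
Colour `G - uv` with `κ` colours, by minimality. A colour missing from the edges at `u`, the
vertex `u` and the edges at `v` could be given to `uv` after recolouring `v`, which has at most
`2 deg v < κ` colours to avoid. So these colours cover all `κ`, and `deg u + deg v ≤ κ + 1`
forces the edge colours at `u` and at `v` to be disjoint and to avoid the colour of `u`. If
`deg w ≤ κ - 2`, some colour `β` is missing at `w`; recolouring `uw` (if `β` occurs at `v`) or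
`vw` (if not) with `β` frees the old colour of that edge for `uv`.
-/

open Function Finset

namespace IsTotalColoring

variable {G H : SimpleGraph V} {α : Type*} {fv : V → α} {fe : Sym2 V → α}

theorem anti (hle : H ≤ G) (h : IsTotalColoring G fv fe) : IsTotalColoring H fv fe :=
  ⟨fun x y hxy => h.1 x y (hle hxy),
    fun e₁ e₂ h₁ h₂ => h.2.1 e₁ e₂ (edgeSet_mono hle h₁) (edgeSet_mono hle h₂),
    fun x e he => h.2.2 x e (edgeSet_mono hle he)⟩

theorem comp {β : Type*} {g : α → β} (hg : Injective g) (h : IsTotalColoring G fv fe) :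
    IsTotalColoring G (g ∘ fv) (g ∘ fe) :=
  ⟨fun x y hxy => hg.ne (h.1 x y hxy),
    fun e₁ e₂ h₁ h₂ hne hsh => hg.ne (h.2.1 e₁ e₂ h₁ h₂ hne hsh),
    fun x e he hx => hg.ne (h.2.2 x e he hx)⟩

theorem update_vertex [DecidableEq V] (h : IsTotalColoring G fv fe) {v : V} {c : α}
    (hadj : ∀ x, G.Adj v x → fv x ≠ c) (hinc : ∀ e ∈ G.incidenceSet v, fe e ≠ c) :
    IsTotalColoring G (update fv v c) fe := by
  refine ⟨fun x y hxy => ?_, h.2.1, fun x e he hx => ?_⟩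
  · rcases eq_or_ne x v with rfl | hx
    · simpa [hxy.ne'] using (hadj y hxy).symm
    rcases eq_or_ne y v with rfl | hy
    · simpa [hx] using hadj x hxy.symm
    simpa [hx, hy] using h.1 x y hxy
  · rcases eq_or_ne x v with rfl | hxv
    · simpa using (hinc e ⟨he, hx⟩).symm
    simpa [hxv] using h.2.2 x e he hx

theorem update_edge_of_deleteEdges [DecidableEq V] {a b : V}
    (h : IsTotalColoring (G.deleteEdges {s(a, b)}) fv fe) (hne : fv a ≠ fv b) {c : α}
    (ha : fv a ≠ c) (hb : fv b ≠ c)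
    (hc : ∀ e ∈ G.edgeSet, e ≠ s(a, b) → (a ∈ e ∨ b ∈ e) → fe e ≠ c) :
    IsTotalColoring G fv (update fe s(a, b) c) := by
  have hdel : ∀ e ∈ G.edgeSet, e ≠ s(a, b) → e ∈ (G.deleteEdges {s(a, b)}).edgeSet :=
    fun e he hne => by simpa [edgeSet_deleteEdges] using ⟨he, hne⟩
  have hend : ∀ {x : V} {e : Sym2 V}, x ∈ s(a, b) → x ∈ e → a ∈ e ∨ b ∈ e := by
    rintro x e hx hxe
    rcases Sym2.mem_iff.mp hx with rfl | rfl <;> simp [hxe]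
  refine ⟨fun x y hxy => ?_, fun e₁ e₂ h₁ h₂ hne₁₂ ⟨x, hx₁, hx₂⟩ => ?_,
    fun x e he hx => ?_⟩
  · by_cases hxy' : s(x, y) = s(a, b)
    · rcases Sym2.eq_iff.mp hxy' with ⟨rfl, rfl⟩ | ⟨rfl, rfl⟩
      exacts [hne, hne.symm]
    exact h.1 x y ((deleteEdges_adj ..).mpr ⟨hxy, hxy'⟩)
  · by_cases c₁ : e₁ = s(a, b)
    · subst c₁
      simpa [Ne.symm hne₁₂] using (hc e₂ h₂ (Ne.symm hne₁₂) (hend hx₁ hx₂)).symm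
    by_cases c₂ : e₂ = s(a, b)
    · subst c₂
      simpa [hne₁₂] using hc e₁ h₁ hne₁₂ (hend hx₂ hx₁)
    simpa [c₁, c₂] using
      h.2.1 e₁ e₂ (hdel e₁ h₁ c₁) (hdel e₂ h₂ c₂) hne₁₂ ⟨x, hx₁, hx₂⟩
  · by_cases c₁ : e = s(a, b)
    · subst c₁
      rcases Sym2.mem_iff.mp hx with rfl | rfl <;> simpa
    simpa [c₁] using h.2.2 x e (hdel e he c₁) hx

theorem update_edge [DecidableEq V] {a b : V} (h : IsTotalColoring G fv fe) (hab : G.Adj a b)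
    {c : α} (ha : fv a ≠ c) (hb : fv b ≠ c)
    (hc : ∀ e ∈ G.edgeSet, e ≠ s(a, b) → (a ∈ e ∨ b ∈ e) → fe e ≠ c) :
    IsTotalColoring G fv (update fe s(a, b) c) :=
  (h.anti (G.deleteEdges_le _)).update_edge_of_deleteEdges (h.1 a b hab) ha hb hc

end IsTotalColoring

theorem hasTotalColoring_card [Fintype V] (G : SimpleGraph V) :
    HasTotalColoring G (Fintype.card (V ⊕ Sym2 V)) := by
  classical
  let f := Fintype.equivFin (V ⊕ Sym2 V)
  exact ⟨f ∘ Sum.inl, f ∘ Sum.inr, fun x y hxy => by simp [hxy.ne],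
    fun e₁ e₂ _ _ hne _ => by simp [hne], fun x e _ _ => by simp⟩

section TotalChromaticNumber

variable {G : SimpleGraph V}

theorem HasTotalColoring.mono {m n : ℕ} (h : HasTotalColoring G m) (hmn : m ≤ n) :
    HasTotalColoring G n :=
  let ⟨_, _, hc⟩ := h
  ⟨_, _, hc.comp (Fin.castLE_injective hmn)⟩

theorem hasTotalColoring_of_totalChromaticNumber_le [Fintype V] {κ : ℕ}
    (h : totalChromaticNumber G ≤ κ) : HasTotalColoring G κ :=
  HasTotalColoring.mono (Nat.sInf_mem (s := {n | HasTotalColoring G n})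
    ⟨_, hasTotalColoring_card G⟩) h

theorem not_hasTotalColoring_of_lt_totalChromaticNumber {κ : ℕ}
    (h : κ < totalChromaticNumber G) : ¬ HasTotalColoring G κ :=
  fun hκ => (Nat.sInf_le hκ).not_gt h

end TotalChromaticNumber

section Degree

variable {G H : SimpleGraph V}

theorem deg_mono [Finite V] (hle : H ≤ G) (v : V) : deg H v ≤ deg G v :=
  Set.ncard_le_ncard fun _ hx => hle hx

theorem deg_deleteEdges_add_one [Finite V] {u v : V} (huv : G.Adj u v) :
    deg (G.deleteEdges {s(u, v)}) v + 1 = deg G v := by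
  have : (G.deleteEdges {s(u, v)}).neighborSet v = G.neighborSet v \ {u} := by
    ext x; simp [huv.ne, and_comm, eq_comm]
  rw [deg, deg, this, Set.ncard_sdiff_singleton_add_one (G.mem_neighborSet v u |>.mpr huv.symm)]

theorem deg_eq_degree [Fintype V] [DecidableRel G.Adj] (v : V) : deg G v = G.degree v := by
  rw [deg, Set.ncard_eq_toFinset_card']
  rfl

end Degree

section EdgeColors

variable {G : SimpleGraph V} [Fintype V] [DecidableEq V] [DecidableRel G.Adj]
  {α : Type*} [DecidableEq α]

def edgeColors (G : SimpleGraph V) [DecidableRel G.Adj] (fe : Sym2 V → α) (v : V) : Finset α :=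
  (G.incidenceFinset v).image fe

theorem mem_edgeColors {fe : Sym2 V → α} {v : V} {e : Sym2 V} (he : e ∈ G.edgeSet)
    (hv : v ∈ e) : fe e ∈ edgeColors G fe v :=
  mem_image_of_mem fe ((mem_incidenceFinset ..).mpr ⟨he, hv⟩)

theorem card_edgeColors_le (fe : Sym2 V → α) (v : V) : #(edgeColors G fe v) ≤ deg G v :=
  card_image_le.trans (by rw [card_incidenceFinset_eq_degree, deg_eq_degree])

theorem IsTotalColoring.exists_update_vertex {κ : ℕ} {fv : V → Fin κ} {fe : Sym2 V → Fin κ}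
    (h : IsTotalColoring G fv fe) (v : V) (S : Finset (Fin κ)) (hS : #S + 2 * deg G v < κ) :
    ∃ c ∉ S, IsTotalColoring G (update fv v c) fe := by
  have hcard :
      #(S ∪ (G.neighborFinset v).image fv ∪ edgeColors G fe v) < #(univ : Finset (Fin κ)) :=
    calc _ ≤ #S + #((G.neighborFinset v).image fv) + #(edgeColors G fe v) :=
          (card_union_le _ _).trans (Nat.add_le_add_right (card_union_le _ _) _)
      _ ≤ #S + deg G v + deg G v := by
          gcongr
          · exact card_image_le.trans (deg_eq_degree v).ge
          · exact card_edgeColors_le fe v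
      _ < _ := by rw [card_univ, Fintype.card_fin]; omega
  obtain ⟨c, -, hc⟩ := exists_mem_notMem_of_card_lt_card hcard
  simp only [mem_union, not_or] at hc
  refine ⟨c, hc.1.1, h.update_vertex (fun x hx hxc => ?_) (fun e he hec => ?_)⟩
  · exact hc.1.2 (hxc ▸ mem_image_of_mem fv ((mem_neighborFinset ..).mpr hx))
  · exact hc.2 (hec ▸ mem_edgeColors he.1 he.2)

end EdgeColors

theorem IsTotalColoring.hasTotalColoring_of_deleteEdges [Fintype V] {G : SimpleGraph V}
    {κ : ℕ} {u v : V} {fv : V → Fin κ} {fe : Sym2 V → Fin κ}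
    (h : IsTotalColoring (G.deleteEdges {s(u, v)}) fv fe) (huv : G.Adj u v)
    (hv : 2 * deg G v < κ) {γ : Fin κ} (hu : fv u ≠ γ)
    (hγ : ∀ e ∈ (G.deleteEdges {s(u, v)}).edgeSet, (u ∈ e ∨ v ∈ e) → fe e ≠ γ) :
    HasTotalColoring G κ := by
  classical
  obtain ⟨c, hcS, hc⟩ := h.exists_update_vertex v {fv u, γ} (by
    have hdeg := deg_deleteEdges_add_one huv
    have := card_le_two (a := fv u) (b := γ)
    omega)
  simp only [mem_insert, mem_singleton, not_or] at hcS
  refine ⟨_, _, hc.update_edge_of_deleteEdges (c := γ) ?_ ?_ ?_ fun e he hne huve => ?_⟩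
  · simpa [huv.ne] using Ne.symm hcS.1
  · simpa [huv.ne] using hu
  · simpa using hcS.2
  · exact hγ e (by simpa [edgeSet_deleteEdges] using ⟨he, hne⟩) huve

theorem Finset.disjoint_and_notMem_of_forall_mem {α : Type*} [Fintype α] [DecidableEq α]
    {s t : Finset α} {a : α} (h : ∀ x, x ∈ s ∪ t ∪ {a})
    (hcard : #s + #t + 1 ≤ Fintype.card α) :
    Disjoint s t ∧ a ∉ t := by
  have huniv : #(s ∪ t ∪ {a}) = Fintype.card α := by
    rw [eq_univ_iff_forall.mpr h, card_univ]
  have h₁ := card_union_le (s ∪ t) {a}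
  have h₂ := card_union_le s t
  rw [card_singleton] at h₁
  have hst : Disjoint s t := card_union_eq_card_add_card.mp (by omega)
  have hsta : Disjoint (s ∪ t) {a} :=
    card_union_eq_card_add_card.mp (by rw [card_singleton]; omega)
  exact ⟨hst, fun ha => disjoint_singleton_right.mp hsta (mem_union_right s ha)⟩

section Recoloring

variable [Fintype V] {G : SimpleGraph V} {κ : ℕ} {u v w : V} {fv : V → Fin κ}
  {fe : Sym2 V → Fin κ}

theorem IsTotalColoring.disjoint_edgeColors [DecidableEq V] [DecidableRel G.Adj]
    (h : IsTotalColoring (G.deleteEdges {s(u, v)}) fv fe) (huv : G.Adj u v)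
    (hv : 2 * deg G v < κ) (hsum : deg G u + deg G v ≤ κ + 1) (hG : ¬ HasTotalColoring G κ) :
    Disjoint (edgeColors (G.deleteEdges {s(u, v)}) fe u)
      (edgeColors (G.deleteEdges {s(u, v)}) fe v) ∧
    fv u ∉ edgeColors (G.deleteEdges {s(u, v)}) fe v := by
  refine disjoint_and_notMem_of_forall_mem (fun γ => ?_) ?_
  · by_contra hγ
    simp only [mem_union, mem_singleton, not_or] at hγ
    refine hG (h.hasTotalColoring_of_deleteEdges huv hv (Ne.symm hγ.2) fun e he hor hc => ?_)
    rcases hor with hu | hv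
    · exact hγ.1.1 (hc ▸ mem_edgeColors he hu)
    · exact hγ.1.2 (hc ▸ mem_edgeColors he hv)
  · have hu := deg_deleteEdges_add_one huv.symm
    have hv := deg_deleteEdges_add_one huv
    rw [Sym2.eq_swap] at hu
    have := card_edgeColors_le (G := G.deleteEdges {s(u, v)}) fe u
    have := card_edgeColors_le (G := G.deleteEdges {s(u, v)}) fe v
    rw [Fintype.card_fin]
    omega

theorem IsTotalColoring.hasTotalColoring_of_mem_edgeColors
    [DecidableEq V] [DecidableRel G.Adj]
    (h : IsTotalColoring (G.deleteEdges {s(u, v)}) fv fe) (huv : G.Adj u v) (hvw : G.Adj v w)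
    (huw : G.Adj u w) (hv : 2 * deg G v < κ)
    (hdisj : Disjoint (edgeColors (G.deleteEdges {s(u, v)}) fe u)
      (edgeColors (G.deleteEdges {s(u, v)}) fe v))
    (hfu : fv u ∉ edgeColors (G.deleteEdges {s(u, v)}) fe v) {β : Fin κ}
    (hβv : β ∈ edgeColors (G.deleteEdges {s(u, v)}) fe v)
    (hβw : β ∉ edgeColors (G.deleteEdges {s(u, v)}) fe w) (hβ : fv w ≠ β) :
    HasTotalColoring G κ := by
  have huwH : (G.deleteEdges {s(u, v)}).Adj u w := by simp [huw, hvw.ne', huv.ne]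
  have huw_mem := Sym2.mem_mk_left u w
  have hrec := h.update_edge huwH (c := β) (fun hc => hfu (hc ▸ hβv)) hβ <| by
    rintro e he - (hu | hw) hc
    · exact Finset.disjoint_left.mp hdisj (mem_edgeColors he hu) (hc ▸ hβv)
    · exact hβw (hc ▸ mem_edgeColors he hw)
  refine hrec.hasTotalColoring_of_deleteEdges huv hv (γ := fe s(u, w)) (h.2.2 u _ huwH huw_mem)
    fun e he hor => ?_
  rcases eq_or_ne e s(u, w) with rfl | hne
  · rw [update_self]
    exact fun hc => Finset.disjoint_left.mp hdisj (mem_edgeColors huwH huw_mem) (hc ▸ hβv)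
  rw [update_of_ne hne]
  rcases hor with hu | hv
  · exact h.2.1 e _ he huwH hne ⟨u, hu, huw_mem⟩
  · exact fun hc => Finset.disjoint_left.mp hdisj (mem_edgeColors huwH huw_mem)
      (hc ▸ mem_edgeColors he hv)

theorem IsTotalColoring.hasTotalColoring_of_notMem_edgeColors
    [DecidableEq V] [DecidableRel G.Adj]
    (h : IsTotalColoring (G.deleteEdges {s(u, v)}) fv fe) (huv : G.Adj u v) (hvw : G.Adj v w)
    (huw : G.Adj u w) (hv : 2 * deg G v < κ)
    (hdisj : Disjoint (edgeColors (G.deleteEdges {s(u, v)}) fe u)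
      (edgeColors (G.deleteEdges {s(u, v)}) fe v))
    (hfu : fv u ∉ edgeColors (G.deleteEdges {s(u, v)}) fe v) {β : Fin κ}
    (hβv : β ∉ edgeColors (G.deleteEdges {s(u, v)}) fe v)
    (hβw : β ∉ edgeColors (G.deleteEdges {s(u, v)}) fe w) (hβ : fv w ≠ β) :
    HasTotalColoring G κ := by
  have hvwH : (G.deleteEdges {s(u, v)}).Adj v w := by simp [hvw, huw.ne', huv.ne']
  have hvw_mem := Sym2.mem_mk_left v w
  obtain ⟨c, hcβ, hc⟩ := h.exists_update_vertex v {β} (by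
    have := deg_deleteEdges_add_one huv
    rw [card_singleton]
    omega)
  have hrec := hc.update_edge hvwH (c := β) (by simpa using hcβ)
      (by simpa [hvw.ne'] using hβ) <| by
    rintro e he - (hv' | hw) hc
    · exact hβv (hc ▸ mem_edgeColors he hv')
    · exact hβw (hc ▸ mem_edgeColors he hw)
  refine hrec.hasTotalColoring_of_deleteEdges huv hv (γ := fe s(v, w)) ?_ fun e he hor => ?_
  · rw [update_of_ne huv.ne]
    exact fun hc => hfu (hc ▸ mem_edgeColors hvwH hvw_mem)
  rcases eq_or_ne e s(v, w) with rfl | hne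
  · rw [update_self]
    exact fun hc => hβv (hc ▸ mem_edgeColors hvwH hvw_mem)
  rw [update_of_ne hne]
  rcases hor with hu | hv
  · exact fun hc => Finset.disjoint_left.mp hdisj (mem_edgeColors he hu)
      (hc ▸ mem_edgeColors hvwH hvw_mem)
  · exact h.2.1 e _ he hvwH hne ⟨v, hv, hvw_mem⟩

theorem IsTotalColoring.hasTotalColoring_of_triangle
    (h : IsTotalColoring (G.deleteEdges {s(u, v)}) fv fe) (huv : G.Adj u v) (hvw : G.Adj v w)
    (huw : G.Adj u w) (hv : 2 * deg G v < κ) (hsum : deg G u + deg G v ≤ κ + 1)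
    (hw : deg G w + 1 < κ) : HasTotalColoring G κ := by
  classical
  by_contra hG
  obtain ⟨hdisj, hfu⟩ := h.disjoint_edgeColors huv hv hsum hG
  obtain ⟨β, -, hβ⟩ := exists_mem_notMem_of_card_lt_card
    (s := edgeColors (G.deleteEdges {s(u, v)}) fe w ∪ {fv w}) (t := univ) (by
      have := card_edgeColors_le (G := G.deleteEdges {s(u, v)}) fe w
      have := deg_mono (G.deleteEdges_le {s(u, v)}) w
      have := card_union_le (edgeColors (G.deleteEdges {s(u, v)}) fe w) {fv w}
      rw [card_singleton] at *
      rw [card_univ, Fintype.card_fin]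
      omega)
  simp only [mem_union, mem_singleton, not_or] at hβ
  by_cases hβv : β ∈ edgeColors (G.deleteEdges {s(u, v)}) fe v
  · exact hG (h.hasTotalColoring_of_mem_edgeColors huv hvw huw hv hdisj hfu hβv hβ.1
      (Ne.symm hβ.2))
  · exact hG (h.hasTotalColoring_of_notMem_edgeColors huv hvw huw hv hdisj hfu hβv hβ.1
      (Ne.symm hβ.2))

end Recoloring

/-- in a κ-deletion-minimal graph, if `u, v` are adjacent with
`deg v ≤ ⌊(κ-1)/2⌋` and `deg u + deg v ≤ κ + 1`, and `uv` lies in a triangle `uvw`,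
then `deg w = κ - 1`. -/
theorem stmt_8 {V : Type*} [Fintype V] (κ : ℕ) (G : SimpleGraph V)
    (hG : DeletionMinimal κ G) (u v w : V)
    (huv : G.Adj u v) (hvw : G.Adj v w) (huw : G.Adj u w)
    (hv : deg G v ≤ (κ - 1) / 2) (hsum : deg G u + deg G v ≤ κ + 1) :
    deg G w = κ - 1 := by
  obtain ⟨hmax, hχ, hmin⟩ := hG
  by_contra hw
  have hlt : G.deleteEdges {s(u, v)} < G :=
    (G.deleteEdges_le _).lt_of_ne fun h => ((deleteEdges_adj ..).mp (h ▸ huv)).2 rfl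
  obtain ⟨fv, fe, hcol⟩ := hasTotalColoring_of_totalChromaticNumber_le (hmin _ hlt)
  have := hmax w
  exact not_hasTotalColoring_of_lt_totalChromaticNumber hχ
    (hcol.hasTotalColoring_of_triangle huv hvw huw (by omega) hsum (by omega))
end

section
/- Let κ ≥ 7 and let G be a κ-deletion-minimal graph with respect to total coloring. Then G contains no triangle uvw with deg(u) = deg(v) = deg(w) = 4. -/
open SimpleGraph

variable {V : Type*}

/-! ### Auxiliary lemmas -/

section Aux

variable {W : Type*}

lemma hasTotalColoring_mono {G : SimpleGraph W} {m n : ℕ} (hmn : m ≤ n)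
    (h : HasTotalColoring G m) : HasTotalColoring G n := by
  obtain ⟨fv, fe, h1, h2, h3⟩ := h
  refine ⟨Fin.castLE hmn ∘ fv, Fin.castLE hmn ∘ fe, ?_, ?_, ?_⟩
  · exact fun a b hab hc => h1 a b hab (Fin.castLE_injective hmn hc)
  · exact fun e₁ e₂ m1 m2 hne hsh hc => h2 e₁ e₂ m1 m2 hne hsh (Fin.castLE_injective hmn hc)
  · exact fun z e me hz hc => h3 z e me hz (Fin.castLE_injective hmn hc)

lemma exists_hasTotalColoring [Fintype W] (G : SimpleGraph W) : ∃ n, HasTotalColoring G n := by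
  classical
  refine ⟨Fintype.card (W ⊕ Sym2 W), ?_⟩
  let e := Fintype.equivFin (W ⊕ Sym2 W)
  refine ⟨fun z => e (Sum.inl z), fun s => e (Sum.inr s), ?_, ?_, ?_⟩
  · intro a b hab hc
    exact hab.ne (Sum.inl.inj (e.injective hc))
  · intro e₁ e₂ _ _ hne _ hc
    exact hne (Sum.inr.inj (e.injective hc))
  · intro z s _ _ hc
    exact absurd (e.injective hc) (by simp)

lemma hasTotalColoring_of_le [Fintype W] {G : SimpleGraph W} {κ : ℕ}
    (h : totalChromaticNumber G ≤ κ) : HasTotalColoring G κ := by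
  obtain ⟨n, hn⟩ := exists_hasTotalColoring G
  exact hasTotalColoring_mono h (Nat.sInf_mem (⟨n, hn⟩ : Set.Nonempty {n | HasTotalColoring G n}))

lemma not_hasTotalColoring_of_lt {G : SimpleGraph W} {κ : ℕ}
    (h : κ < totalChromaticNumber G) : ¬ HasTotalColoring G κ := by
  intro hc
  have := Nat.sInf_le (show κ ∈ {n | HasTotalColoring G n} from hc)
  unfold totalChromaticNumber at h
  omega

/-! ### List coloring of the octahedron -/

lemma pigeon3 : ∀ s : Finset (Fin 3 × Bool), 4 ≤ s.card →
    ∃ i, (i, false) ∈ s ∧ (i, true) ∈ s := by decide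

lemma pigeon2 : ∀ s : Finset (Fin 2 × Bool), 3 ≤ s.card →
    ∃ i, (i, false) ∈ s ∧ (i, true) ∈ s := by decide

lemma hall_pairs {α : Type*} [DecidableEq α] {k : ℕ} (t : Fin k × Bool → Finset α)
    (hcard : ∀ p, k ≤ (t p).card)
    (hdisj : ∀ i, Disjoint (t (i, false)) (t (i, true)))
    (hpig : ∀ s : Finset (Fin k × Bool), k + 1 ≤ s.card →
      ∃ i, (i, false) ∈ s ∧ (i, true) ∈ s) :
    ∃ f : Fin k × Bool → α, Function.Injective f ∧ ∀ p, f p ∈ t p := by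
  rw [← Finset.all_card_le_biUnion_card_iff_exists_injective]
  intro s
  rcases le_or_gt s.card k with h | h
  · rcases s.eq_empty_or_nonempty with rfl | ⟨p, hp⟩
    · simp
    · calc s.card ≤ k := h
        _ ≤ (t p).card := hcard p
        _ ≤ (s.biUnion t).card :=
          Finset.card_le_card (Finset.subset_biUnion_of_mem t hp)
  · obtain ⟨i, h1, h2⟩ := hpig s h
    have hsub : t (i, false) ∪ t (i, true) ⊆ s.biUnion t :=
      Finset.union_subset (Finset.subset_biUnion_of_mem t h1) (Finset.subset_biUnion_of_mem t h2)
    have hcup : k + k ≤ (t (i, false) ∪ t (i, true)).card := by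
      rw [Finset.card_union_of_disjoint (hdisj i)]
      exact Nat.add_le_add (hcard _) (hcard _)
    have hs2 : s.card ≤ k + k := by
      have h1 := Finset.card_le_univ s
      have h2 : Fintype.card (Fin k × Bool) = k * 2 := by simp
      omega
    calc s.card ≤ k + k := hs2
      _ ≤ (t (i, false) ∪ t (i, true)).card := hcup
      _ ≤ (s.biUnion t).card := Finset.card_le_card hsub

lemma erase_card_ge {α : Type*} [DecidableEq α] {s : Finset α} {γ : α} {n : ℕ}
    (h : n + 1 ≤ s.card) : n ≤ (s.erase γ).card := by
  by_cases hg : γ ∈ s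
  · rw [Finset.card_erase_of_mem hg]; omega
  · rw [Finset.erase_eq_of_notMem hg]; omega

lemma listColor2 {α : Type*} [DecidableEq α] (L : Fin 2 × Bool → Finset α)
    (h : ∀ p, 2 ≤ (L p).card) :
    ∃ f : Fin 2 × Bool → α, (∀ p, f p ∈ L p) ∧
      ∀ p q : Fin 2 × Bool, p.1 ≠ q.1 → f p ≠ f q := by
  by_cases hd : ∀ i, Disjoint (L (i, false)) (L (i, true))
  · obtain ⟨f, hinj, hmem⟩ := hall_pairs L h hd pigeon2
    exact ⟨f, hmem, fun p q hpq hc => hpq (congrArg Prod.fst (hinj hc))⟩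
  · push_neg at hd
    obtain ⟨i, hi⟩ := hd
    rw [Finset.not_disjoint_iff] at hi
    obtain ⟨γ, hγ1, hγ2⟩ := hi
    have hmemi : ∀ b, γ ∈ L (i, b) := by intro b; cases b; exacts [hγ1, hγ2]
    have hnf : ((L (i + 1, false)).erase γ).Nonempty :=
      Finset.card_pos.1 (by have := erase_card_ge (s := L (i + 1, false)) (γ := γ)
                              (n := 1) (h _); omega)
    have hnt : ((L (i + 1, true)).erase γ).Nonempty :=
      Finset.card_pos.1 (by have := erase_card_ge (s := L (i + 1, true)) (γ := γ)
                              (n := 1) (h _); omega)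
    obtain ⟨cf, hcf⟩ := hnf
    obtain ⟨ct, hct⟩ := hnt
    have f2 : ∀ a b : Fin 2, a ≠ b → a = b + 1 := by decide
    refine ⟨fun p => if p.1 = i then γ else (if p.2 then ct else cf), ?_, ?_⟩
    · rintro ⟨p1, pb⟩
      by_cases h1 : p1 = i
      · simp only [h1, if_pos rfl]
        subst h1
        exact hmemi pb
      · simp only [if_neg h1]
        rw [f2 p1 i h1]
        cases pb
        · simp only [Bool.false_eq_true, if_false]
          exact Finset.mem_of_mem_erase hcf
        · simp only [if_true]
          exact Finset.mem_of_mem_erase hct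
    · rintro ⟨p1, pb⟩ ⟨q1, qb⟩ hpq
      simp only at hpq
      by_cases h1 : p1 = i
      · have h2 : ¬ q1 = i := fun hc => hpq (h1.trans hc.symm)
        simp only [if_pos h1, if_neg h2]
        cases qb
        · simp only [Bool.false_eq_true, if_false]
          exact (Finset.ne_of_mem_erase hcf).symm
        · simp only [if_true]
          exact (Finset.ne_of_mem_erase hct).symm
      · by_cases h2 : q1 = i
        · simp only [if_neg h1, if_pos h2]
          cases pb
          · simp only [Bool.false_eq_true, if_false]
            exact Finset.ne_of_mem_erase hcf
          · simp only [if_true]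
            exact Finset.ne_of_mem_erase hct
        · exfalso
          have : ∀ a b c : Fin 2, a ≠ c → b ≠ c → a = b := by decide
          exact hpq (this p1 q1 i h1 h2)

lemma listColor3 {α : Type*} [DecidableEq α] (L : Fin 3 × Bool → Finset α)
    (h : ∀ p, 3 ≤ (L p).card) :
    ∃ f : Fin 3 × Bool → α, (∀ p, f p ∈ L p) ∧
      ∀ p q : Fin 3 × Bool, p.1 ≠ q.1 → f p ≠ f q := by
  classical
  by_cases hd : ∀ i, Disjoint (L (i, false)) (L (i, true))
  · obtain ⟨f, hinj, hmem⟩ := hall_pairs L h hd pigeon3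
    exact ⟨f, hmem, fun p q hpq hc => hpq (congrArg Prod.fst (hinj hc))⟩
  · push_neg at hd
    obtain ⟨i, hi⟩ := hd
    rw [Finset.not_disjoint_iff] at hi
    obtain ⟨γ, hγ1, hγ2⟩ := hi
    have hmemi : ∀ b, γ ∈ L (i, b) := by intro b; cases b; exacts [hγ1, hγ2]
    set L' : Fin 2 × Bool → Finset α :=
      fun p => (L ((if p.1 = 0 then i + 1 else i + 2), p.2)).erase γ with hL'
    have h2 : ∀ p, 2 ≤ (L' p).card := by
      intro p
      exact erase_card_ge (h _)
    obtain ⟨g, hgmem, hgcross⟩ := listColor2 L' h2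
    have hg0 : ∀ b, g (0, b) ∈ (L (i + 1, b)).erase γ := by
      intro b
      have := hgmem (0, b)
      simpa [hL'] using this
    have hg1 : ∀ b, g (1, b) ∈ (L (i + 2, b)).erase γ := by
      intro b
      have := hgmem (1, b)
      simpa [hL'] using this
    have f3 : ∀ a b : Fin 3, a ≠ b → a ≠ b + 1 → a = b + 2 := by decide
    refine ⟨fun p => if p.1 = i then γ else if p.1 = i + 1 then g (0, p.2) else g (1, p.2),
      ?_, ?_⟩
    · rintro ⟨p1, pb⟩
      by_cases h1 : p1 = i
      · simp only [if_pos h1]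
        subst h1
        exact hmemi pb
      · by_cases hp2 : p1 = i + 1
        · simp only [if_neg h1, if_pos hp2]
          rw [hp2]
          exact Finset.mem_of_mem_erase (hg0 pb)
        · simp only [if_neg h1, if_neg hp2]
          rw [f3 p1 i h1 hp2]
          exact Finset.mem_of_mem_erase (hg1 pb)
    · rintro ⟨p1, pb⟩ ⟨q1, qb⟩ hpq
      simp only at hpq
      by_cases h1 : p1 = i
      · have h2' : ¬ q1 = i := fun hc => hpq (h1.trans hc.symm)
        simp only [if_pos h1, if_neg h2']
        by_cases hq2 : q1 = i + 1
        · simp only [if_pos hq2]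
          exact (Finset.ne_of_mem_erase (hg0 qb)).symm
        · simp only [if_neg hq2]
          exact (Finset.ne_of_mem_erase (hg1 qb)).symm
      · by_cases h2' : q1 = i
        · simp only [if_neg h1, if_pos h2']
          by_cases hp2 : p1 = i + 1
          · simp only [if_pos hp2]
            exact Finset.ne_of_mem_erase (hg0 pb)
          · simp only [if_neg hp2]
            exact Finset.ne_of_mem_erase (hg1 pb)
        · simp only [if_neg h1, if_neg h2']
          by_cases hp2 : p1 = i + 1
          · have hq2 : ¬ q1 = i + 1 := fun hc => hpq (hp2.trans hc.symm)
            simp only [if_pos hp2, if_neg hq2]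
            exact hgcross (0, pb) (1, qb) (show (0 : Fin 2) ≠ 1 by decide)
          · have hq2 : q1 = i + 1 := by
              have hp3 := f3 p1 i h1 hp2
              by_contra hq2
              exact hpq (hp3.trans (f3 q1 i h2' hq2).symm)
            simp only [if_neg hp2, if_pos hq2]
            exact hgcross (1, pb) (0, qb) (show (1 : Fin 2) ≠ 0 by decide)

lemma card4 {α : Type*} [DecidableEq α] (a b c d : α) :
    ({a, b, c, d} : Finset α).card ≤ 4 := by
  apply (Finset.card_insert_le _ _).trans
  apply Nat.succ_le_succ
  apply (Finset.card_insert_le _ _).trans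
  apply Nat.succ_le_succ
  apply (Finset.card_insert_le _ _).trans
  simp

lemma oct_list {κ : ℕ} (hκ : 7 ≤ κ) (FA Fa FB Fb FC Fc : Finset (Fin κ))
    (hFA : FA.card ≤ 4) (hFa : Fa.card ≤ 4) (hFB : FB.card ≤ 4) (hFb : Fb.card ≤ 4)
    (hFC : FC.card ≤ 4) (hFc : Fc.card ≤ 4) :
    ∃ A a B b C c : Fin κ, A ∉ FA ∧ a ∉ Fa ∧ B ∉ FB ∧ b ∉ Fb ∧ C ∉ FC ∧ c ∉ Fc ∧
      A ≠ B ∧ A ≠ b ∧ A ≠ C ∧ A ≠ c ∧ a ≠ B ∧ a ≠ b ∧ a ≠ C ∧ a ≠ c ∧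
      B ≠ C ∧ B ≠ c ∧ b ≠ C ∧ b ≠ c := by
  classical
  set F : Fin 3 × Bool → Finset (Fin κ) := fun p =>
    if p.1 = 0 then (if p.2 then Fa else FA)
    else if p.1 = 1 then (if p.2 then Fb else FB)
    else (if p.2 then Fc else FC) with hF
  have hL : ∀ p, 3 ≤ ((F p)ᶜ).card := by
    intro p
    have hcard : (F p).card ≤ 4 := by
      rcases p with ⟨p1, pb⟩
      fin_cases p1 <;> cases pb <;> simpa [hF]
    have hcc : (F p)ᶜ.card = κ - (F p).card := by
      rw [Finset.card_compl]
      simp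
    omega
  obtain ⟨f, hmem, hcross⟩ := listColor3 (fun p => (F p)ᶜ) hL
  have hm : ∀ p, f p ∉ F p := fun p => Finset.mem_compl.1 (hmem p)
  refine ⟨f (0, false), f (0, true), f (1, false), f (1, true), f (2, false), f (2, true),
    ?_, ?_, ?_, ?_, ?_, ?_,
    hcross _ _ (by decide), hcross _ _ (by decide), hcross _ _ (by decide),
    hcross _ _ (by decide), hcross _ _ (by decide), hcross _ _ (by decide),
    hcross _ _ (by decide), hcross _ _ (by decide), hcross _ _ (by decide),
    hcross _ _ (by decide), hcross _ _ (by decide), hcross _ _ (by decide)⟩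
  · have := hm (0, false); simpa [hF] using this
  · have := hm (0, true); simpa [hF] using this
  · have := hm (1, false); simpa [hF] using this
  · have := hm (1, true); simpa [hF] using this
  · have := hm (2, false); simpa [hF] using this
  · have := hm (2, true); simpa [hF] using this

/-! ### Graph helper lemmas -/

lemma mem_edge_struct {G : SimpleGraph W} (e : Sym2 W) (x : W)
    (he : e ∈ G.edgeSet) (hx : x ∈ e) : ∃ z, G.Adj x z ∧ e = s(x, z) := by
  revert he hx
  induction e using Sym2.ind with
  | _ a b =>
    intro he hx
    rw [SimpleGraph.mem_edgeSet] at he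
    rw [Sym2.mem_iff] at hx
    rcases hx with rfl | rfl
    · exact ⟨b, he, rfl⟩
    · exact ⟨a, he.symm, Sym2.eq_swap⟩

lemma quad_mem [DecidableEq W] {t : Finset W} (h4 : t.card = 4) {v w : W}
    (hv : v ∈ t) (hw : w ∈ t) (hvw : v ≠ w) :
    ∃ x y, ∀ z ∈ t, z = v ∨ z = w ∨ z = x ∨ z = y := by
  have hw' : w ∈ t.erase v := Finset.mem_erase.2 ⟨Ne.symm hvw, hw⟩
  have h2 : ((t.erase v).erase w).card = 2 := by
    rw [Finset.card_erase_of_mem hw', Finset.card_erase_of_mem hv, h4]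
  obtain ⟨x, y, hxy, hset⟩ := Finset.card_eq_two.1 h2
  refine ⟨x, y, fun z hz => ?_⟩
  by_cases h1 : z = v
  · exact Or.inl h1
  by_cases h2' : z = w
  · exact Or.inr (Or.inl h2')
  have hz2 : z ∈ (t.erase v).erase w :=
    Finset.mem_erase.2 ⟨h2', Finset.mem_erase.2 ⟨h1, hz⟩⟩
  rw [hset] at hz2
  rcases Finset.mem_insert.1 hz2 with rfl | hmem
  · exact Or.inr (Or.inr (Or.inl rfl))
  · exact Or.inr (Or.inr (Or.inr (Finset.mem_singleton.1 hmem)))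

end Aux

/-- for κ ≥ 7, a κ-deletion-minimal graph contains no
(4,4,4)-triangle. -/
theorem stmt_13 {V : Type*} [Fintype V] (κ : ℕ) (hκ : 7 ≤ κ) (G : SimpleGraph V)
    (hG : DeletionMinimal κ G) (u v w : V)
    (huv : G.Adj u v) (hvw : G.Adj v w) (huw : G.Adj u w)
    (hu : deg G u = 4) (hv : deg G v = 4) (hw : deg G w = 4) : False := by
  classical
  obtain ⟨hdeg, hbig, hmin⟩ := hG
  have huv' : u ≠ v := huv.ne
  have hvw' : v ≠ w := hvw.ne
  have huw' : u ≠ w := huw.ne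
  -- the graph with the edge uv removed
  set H : SimpleGraph V := G.deleteEdges {s(u, v)} with hH
  have hHlt : H < G := by
    refine lt_of_le_of_ne ?_ ?_
    · rw [hH]; exact SimpleGraph.deleteEdges_le _
    · intro h
      have h2 : H.Adj u v := by rw [h]; exact huv
      rw [hH] at h2
      simp at h2
  have hcol : HasTotalColoring H κ := hasTotalColoring_of_le (hmin H hHlt)
  obtain ⟨fv, fe, hc1, hc2, hc3⟩ := hcol
  have hnotG : ¬ HasTotalColoring G κ := not_hasTotalColoring_of_lt hbig
  -- neighbor structure
  have hdegF : ∀ z : V, (G.neighborFinset z).card = (G.neighborSet z).ncard := by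
    intro z
    rw [← Set.ncard_coe_finset]
    congr 1
    ext y
    simp
  obtain ⟨u1, u2, hnbU⟩ := quad_mem (t := G.neighborFinset u) (by rw [hdegF]; exact hu)
      ((G.mem_neighborFinset _ _).2 huv) ((G.mem_neighborFinset _ _).2 huw) hvw'
  obtain ⟨v1, v2, hnbV⟩ := quad_mem (t := G.neighborFinset v) (by rw [hdegF]; exact hv)
      ((G.mem_neighborFinset _ _).2 huv.symm) ((G.mem_neighborFinset _ _).2 hvw) huw'
  obtain ⟨w1, w2, hnbW⟩ := quad_mem (t := G.neighborFinset w) (by rw [hdegF]; exact hw)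
      ((G.mem_neighborFinset _ _).2 huw.symm) ((G.mem_neighborFinset _ _).2 hvw.symm) huv'
  have nbrU : ∀ z, G.Adj u z → z = v ∨ z = w ∨ z = u1 ∨ z = u2 := fun z hz =>
    hnbU z ((G.mem_neighborFinset _ _).2 hz)
  have nbrV : ∀ z, G.Adj v z → z = u ∨ z = w ∨ z = v1 ∨ z = v2 := fun z hz =>
    hnbV z ((G.mem_neighborFinset _ _).2 hz)
  have nbrW : ∀ z, G.Adj w z → z = u ∨ z = v ∨ z = w1 ∨ z = w2 := fun z hz =>
    hnbW z ((G.mem_neighborFinset _ _).2 hz)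
  -- choose new colors for u, v, w, uv, uw, vw via the octahedron list lemma
  obtain ⟨cu, ce2, cv, ce1, cw, cx, hcuF, hce2F, hcvF, hce1F, hcwF, hcxF,
      n1, n2, n3, n4, n5, n6, n7, n8, n9, n10, n11, n12⟩ :=
    oct_list hκ
      {fv u1, fv u2, fe s(u, u1), fe s(u, u2)}
      {fe s(v, v1), fe s(v, v2), fe s(w, w1), fe s(w, w2)}
      {fv v1, fv v2, fe s(v, v1), fe s(v, v2)}
      {fe s(u, u1), fe s(u, u2), fe s(w, w1), fe s(w, w2)}
      {fv w1, fv w2, fe s(w, w1), fe s(w, w2)}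
      {fe s(u, u1), fe s(u, u2), fe s(v, v1), fe s(v, v2)}
      (card4 _ _ _ _) (card4 _ _ _ _) (card4 _ _ _ _)
      (card4 _ _ _ _) (card4 _ _ _ _) (card4 _ _ _ _)
  simp only [Finset.mem_insert, Finset.mem_singleton, not_or] at hcuF hce2F hcvF hce1F hcwF hcxF
  obtain ⟨hcu1, hcu2, hcu3, hcu4⟩ := hcuF
  obtain ⟨hce2b1, hce2b2, hce2d1, hce2d2⟩ := hce2F
  obtain ⟨hcv1, hcv2, hcv3, hcv4⟩ := hcvF
  obtain ⟨hce1a1, hce1a2, hce1d1, hce1d2⟩ := hce1F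
  obtain ⟨hcw1, hcw2, hcw3, hcw4⟩ := hcwF
  obtain ⟨hcx1, hcx2, hcx3, hcx4⟩ := hcxF
  -- distinctness of the triangle edges
  have triNe1 : s(u, v) ≠ s(u, w) := by
    intro h
    rcases Sym2.eq_iff.1 h with ⟨-, h2⟩ | ⟨h1, -⟩
    · exact hvw' h2
    · exact huw' h1
  have triNe2 : s(u, v) ≠ s(v, w) := by
    intro h
    rcases Sym2.eq_iff.1 h with ⟨h1, -⟩ | ⟨h1, -⟩
    · exact huv' h1
    · exact huw' h1
  have triNe3 : s(u, w) ≠ s(v, w) := by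
    intro h
    rcases Sym2.eq_iff.1 h with ⟨h1, -⟩ | ⟨h1, -⟩
    · exact huv' h1
    · exact huw' h1
  -- new colorings
  set gv : V → Fin κ :=
    fun z => if z = u then cu else if z = v then cv else if z = w then cw else fv z with hgv
  set ge : Sym2 V → Fin κ :=
    fun e => if e = s(u, v) then cx else if e = s(u, w) then ce1
      else if e = s(v, w) then ce2 else fe e with hge
  have gvu : gv u = cu := by simp [hgv]
  have gvv : gv v = cv := by simp [hgv, (Ne.symm huv' : v ≠ u)]
  have gvw : gv w = cw := by simp [hgv, (Ne.symm huw' : w ≠ u), (Ne.symm hvw' : w ≠ v)]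
  have gvz : ∀ z, z ≠ u → z ≠ v → z ≠ w → gv z = fv z := by
    intro z h1 h2 h3
    simp [hgv, h1, h2, h3]
  have geuv : ge s(u, v) = cx := by simp [hge]
  have geuw : ge s(u, w) = ce1 := by simp [hge, (Ne.symm triNe1 : s(u,w) ≠ s(u,v))]
  have gevw : ge s(v, w) = ce2 := by
    simp [hge, (Ne.symm triNe2 : s(v,w) ≠ s(u,v)), (Ne.symm triNe3 : s(v,w) ≠ s(u,w))]
  have gee : ∀ e, e ≠ s(u, v) → e ≠ s(u, w) → e ≠ s(v, w) → ge e = fe e := by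
    intro e h1 h2 h3
    simp [hge, h1, h2, h3]
  -- H facts
  have hHadj : ∀ a b : V, G.Adj a b → s(a, b) ≠ s(u, v) → H.Adj a b := by
    intro a b hab hne
    rw [hH]
    simp only [SimpleGraph.deleteEdges_adj, Set.mem_singleton_iff]
    exact ⟨hab, hne⟩
  have hHedge : ∀ e, e ∈ G.edgeSet → e ≠ s(u, v) → e ∈ H.edgeSet := by
    intro e he hne
    rw [hH, SimpleGraph.edgeSet_deleteEdges]
    exact ⟨he, by simpa using hne⟩
  -- classification of edges at u, v, w
  have edgeAtU : ∀ e, e ∈ G.edgeSet → u ∈ e → e ≠ s(u, v) → e ≠ s(u, w) →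
      fe e = fe s(u, u1) ∨ fe e = fe s(u, u2) := by
    intro e he hue hne1 hne2
    obtain ⟨z, hz, rfl⟩ := mem_edge_struct e u he hue
    rcases nbrU z hz with rfl | rfl | rfl | rfl
    · exact absurd rfl hne1
    · exact absurd rfl hne2
    · exact Or.inl rfl
    · exact Or.inr rfl
  have edgeAtV : ∀ e, e ∈ G.edgeSet → v ∈ e → e ≠ s(u, v) → e ≠ s(v, w) →
      fe e = fe s(v, v1) ∨ fe e = fe s(v, v2) := by
    intro e he hve hne1 hne2
    obtain ⟨z, hz, rfl⟩ := mem_edge_struct e v he hve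
    rcases nbrV z hz with rfl | rfl | rfl | rfl
    · exact absurd Sym2.eq_swap hne1
    · exact absurd rfl hne2
    · exact Or.inl rfl
    · exact Or.inr rfl
  have edgeAtW : ∀ e, e ∈ G.edgeSet → w ∈ e → e ≠ s(u, w) → e ≠ s(v, w) →
      fe e = fe s(w, w1) ∨ fe e = fe s(w, w2) := by
    intro e he hwe hne1 hne2
    obtain ⟨z, hz, rfl⟩ := mem_edge_struct e w he hwe
    rcases nbrW z hz with rfl | rfl | rfl | rfl
    · exact absurd Sym2.eq_swap hne1
    · exact absurd Sym2.eq_swap hne2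
    · exact Or.inl rfl
    · exact Or.inr rfl
  -- clause 1 : vertex coloring
  have clause1 : ∀ a b : V, G.Adj a b → gv a ≠ gv b := by
    intro a b hab
    by_cases ha1 : a = u
    · rw [ha1] at hab ⊢
      rw [gvu]
      by_cases hb1 : b = v
      · rw [hb1, gvv]; exact n1
      by_cases hb2 : b = w
      · rw [hb2, gvw]; exact n3
      have hbu : b ≠ u := fun h => G.irrefl (h ▸ hab)
      rw [gvz b hbu hb1 hb2]
      rcases nbrU b hab with rfl | rfl | rfl | rfl
      · exact absurd rfl hb1
      · exact absurd rfl hb2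
      · exact hcu1
      · exact hcu2
    by_cases ha2 : a = v
    · rw [ha2] at hab ⊢
      rw [gvv]
      by_cases hb1 : b = u
      · rw [hb1, gvu]; exact n1.symm
      by_cases hb2 : b = w
      · rw [hb2, gvw]; exact n9
      have hbv : b ≠ v := fun h => G.irrefl (h ▸ hab)
      rw [gvz b hb1 hbv hb2]
      rcases nbrV b hab with rfl | rfl | rfl | rfl
      · exact absurd rfl hb1
      · exact absurd rfl hb2
      · exact hcv1
      · exact hcv2
    by_cases ha3 : a = w
    · rw [ha3] at hab ⊢
      rw [gvw]
      by_cases hb1 : b = u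
      · rw [hb1, gvu]; exact n3.symm
      by_cases hb2 : b = v
      · rw [hb2, gvv]; exact n9.symm
      have hbw : b ≠ w := fun h => G.irrefl (h ▸ hab)
      rw [gvz b hb1 hb2 hbw]
      rcases nbrW b hab with rfl | rfl | rfl | rfl
      · exact absurd rfl hb1
      · exact absurd rfl hb2
      · exact hcw1
      · exact hcw2
    · rw [gvz a ha1 ha2 ha3]
      by_cases hb1 : b = u
      · rw [hb1] at hab ⊢
        rw [gvu]
        rcases nbrU a hab.symm with rfl | rfl | rfl | rfl
        · exact absurd rfl ha2
        · exact absurd rfl ha3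
        · exact Ne.symm hcu1
        · exact Ne.symm hcu2
      by_cases hb2 : b = v
      · rw [hb2] at hab ⊢
        rw [gvv]
        rcases nbrV a hab.symm with rfl | rfl | rfl | rfl
        · exact absurd rfl ha1
        · exact absurd rfl ha3
        · exact Ne.symm hcv1
        · exact Ne.symm hcv2
      by_cases hb3 : b = w
      · rw [hb3] at hab ⊢
        rw [gvw]
        rcases nbrW a hab.symm with rfl | rfl | rfl | rfl
        · exact absurd rfl ha1
        · exact absurd rfl ha2
        · exact Ne.symm hcw1
        · exact Ne.symm hcw2
      · rw [gvz b hb1 hb2 hb3]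
        refine hc1 a b (hHadj a b hab ?_)
        intro h
        rcases Sym2.eq_iff.1 h with ⟨h1, -⟩ | ⟨h1, -⟩
        · exact ha1 h1
        · exact ha2 h1
  -- clause 3 : vertex vs incident edge
  have clause3 : ∀ (z : V) (e : Sym2 V), e ∈ G.edgeSet → z ∈ e → gv z ≠ ge e := by
    intro z e he hz
    by_cases he1 : e = s(u, v)
    · subst he1
      rw [geuv]
      rcases Sym2.mem_iff.1 hz with rfl | rfl
      · rw [gvu]; exact n4
      · rw [gvv]; exact n10
    by_cases he2 : e = s(u, w)
    · subst he2
      rw [geuw]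
      rcases Sym2.mem_iff.1 hz with rfl | rfl
      · rw [gvu]; exact n2
      · rw [gvw]; exact n11.symm
    by_cases he3 : e = s(v, w)
    · subst he3
      rw [gevw]
      rcases Sym2.mem_iff.1 hz with rfl | rfl
      · rw [gvv]; exact n5.symm
      · rw [gvw]; exact n7.symm
    · rw [gee e he1 he2 he3]
      by_cases hz1 : z = u
      · rw [hz1] at hz ⊢
        rw [gvu]
        rcases edgeAtU e he hz he1 he2 with h | h <;> rw [h]
        · exact hcu3
        · exact hcu4
      by_cases hz2 : z = v
      · rw [hz2] at hz ⊢
        rw [gvv]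
        rcases edgeAtV e he hz he1 he3 with h | h <;> rw [h]
        · exact hcv3
        · exact hcv4
      by_cases hz3 : z = w
      · rw [hz3] at hz ⊢
        rw [gvw]
        rcases edgeAtW e he hz he2 he3 with h | h <;> rw [h]
        · exact hcw3
        · exact hcw4
      · rw [gvz z hz1 hz2 hz3]
        exact hc3 z e (hHedge e he he1) hz
  -- clause 2 : edge coloring
  have clause2 : ∀ e₁ e₂ : Sym2 V, e₁ ∈ G.edgeSet → e₂ ∈ G.edgeSet → e₁ ≠ e₂ →
      (∃ y, y ∈ e₁ ∧ y ∈ e₂) → ge e₁ ≠ ge e₂ := by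
    rintro e₁ e₂ h1 h2 hne ⟨y, hy1, hy2⟩
    by_cases a1 : e₁ = s(u, v)
    · subst a1
      rw [geuv]
      by_cases b1 : e₂ = s(u, v)
      · exact absurd b1.symm hne
      by_cases b2 : e₂ = s(u, w)
      · subst b2; rw [geuw]; exact n12.symm
      by_cases b3 : e₂ = s(v, w)
      · subst b3; rw [gevw]; exact n8.symm
      rw [gee e₂ b1 b2 b3]
      rcases Sym2.mem_iff.1 hy1 with rfl | rfl
      · rcases edgeAtU e₂ h2 hy2 b1 b2 with h | h <;> rw [h]
        · exact hcx1
        · exact hcx2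
      · rcases edgeAtV e₂ h2 hy2 b1 b3 with h | h <;> rw [h]
        · exact hcx3
        · exact hcx4
    by_cases a2 : e₁ = s(u, w)
    · subst a2
      rw [geuw]
      by_cases b1 : e₂ = s(u, v)
      · subst b1; rw [geuv]; exact n12
      by_cases b2 : e₂ = s(u, w)
      · exact absurd b2.symm hne
      by_cases b3 : e₂ = s(v, w)
      · subst b3; rw [gevw]; exact n6.symm
      rw [gee e₂ b1 b2 b3]
      rcases Sym2.mem_iff.1 hy1 with rfl | rfl
      · rcases edgeAtU e₂ h2 hy2 b1 b2 with h | h <;> rw [h]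
        · exact hce1a1
        · exact hce1a2
      · rcases edgeAtW e₂ h2 hy2 b2 b3 with h | h <;> rw [h]
        · exact hce1d1
        · exact hce1d2
    by_cases a3 : e₁ = s(v, w)
    · subst a3
      rw [gevw]
      by_cases b1 : e₂ = s(u, v)
      · subst b1; rw [geuv]; exact n8
      by_cases b2 : e₂ = s(u, w)
      · subst b2; rw [geuw]; exact n6
      by_cases b3 : e₂ = s(v, w)
      · exact absurd b3.symm hne
      rw [gee e₂ b1 b2 b3]
      rcases Sym2.mem_iff.1 hy1 with rfl | rfl
      · rcases edgeAtV e₂ h2 hy2 b1 b3 with h | h <;> rw [h]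
        · exact hce2b1
        · exact hce2b2
      · rcases edgeAtW e₂ h2 hy2 b2 b3 with h | h <;> rw [h]
        · exact hce2d1
        · exact hce2d2
    · rw [gee e₁ a1 a2 a3]
      by_cases b1 : e₂ = s(u, v)
      · subst b1
        rw [geuv]
        rcases Sym2.mem_iff.1 hy2 with rfl | rfl
        · rcases edgeAtU e₁ h1 hy1 a1 a2 with h | h <;> rw [h]
          · exact Ne.symm hcx1
          · exact Ne.symm hcx2
        · rcases edgeAtV e₁ h1 hy1 a1 a3 with h | h <;> rw [h]
          · exact Ne.symm hcx3
          · exact Ne.symm hcx4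
      by_cases b2 : e₂ = s(u, w)
      · subst b2
        rw [geuw]
        rcases Sym2.mem_iff.1 hy2 with rfl | rfl
        · rcases edgeAtU e₁ h1 hy1 a1 a2 with h | h <;> rw [h]
          · exact Ne.symm hce1a1
          · exact Ne.symm hce1a2
        · rcases edgeAtW e₁ h1 hy1 a2 a3 with h | h <;> rw [h]
          · exact Ne.symm hce1d1
          · exact Ne.symm hce1d2
      by_cases b3 : e₂ = s(v, w)
      · subst b3
        rw [gevw]
        rcases Sym2.mem_iff.1 hy2 with rfl | rfl
        · rcases edgeAtV e₁ h1 hy1 a1 a3 with h | h <;> rw [h]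
          · exact Ne.symm hce2b1
          · exact Ne.symm hce2b2
        · rcases edgeAtW e₁ h1 hy1 a2 a3 with h | h <;> rw [h]
          · exact Ne.symm hce2d1
          · exact Ne.symm hce2d2
      · rw [gee e₂ b1 b2 b3]
        exact hc2 e₁ e₂ (hHedge e₁ h1 a1) (hHedge e₂ h2 b1) hne ⟨y, hy1, hy2⟩
  exact hnotG ⟨gv, ge, clause1, clause2, clause3⟩
end
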